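/- arXiv:2207.10427 — 2 statements merged into one kernel-verified Lean document; each statement's English description precedes it below -/
import Mathlib

section
/- Let J, N_p ∈ ℕ with J ≥ 1. For each variable index i ∈ {1,…,J} let x_{i,p} ∈ ℝ and y_{i,p} > 0 (p ∈ {1,…,N_p}) be particle positions and weights with ∑_{p=1}^{N_p} y_{i,p} = 1, let the prior factorize as positive functions p_i : ℝ → ℝ_{>0}, and let the likelihood ℓ : ℝ^J → ℝ_{>0} be positive. Define the full mean-field objective L := ∑_{p_1=1}^{N_p} ⋯ ∑_{p_J=1}^{N_p} (∏_{i=1}^{J} y_{i,p_i}) · [ ∑_{i=1}^{J} ln y_{i,p_i} − ∑_{i=1}^{J} ln p_i(x_{i,p_i}) − ln ℓ(x_{1,p_1},…,x_{J,p_J}) ]. Then for every fixed j ∈ {1,…,J}, L = ∑_{p=1}^{N_p} y_{j,p} ln y_{j,p} − ∑_{p=1}^{N_p} y_{j,p} [ ln p_j(x_{j,p}) + ∑_{(p_i)_{i≠j}} (∏_{i≠j} y_{i,p_i}) ln ℓ(x_{1,p_1},…,x_{j−1,p_{j−1}}, x_{j,p}, x_{j+1,p_{j+1}},…,x_{J,p_J})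 ] + C_j, where the constant C_j := ∑_{i≠j} ∑_{p=1}^{N_p} y_{i,p} ( ln y_{i,p} − ln p_i(x_{i,p}) ) does not depend on the block (x_{j,·}, y_{j,·}). -/
/-!
The product weights `∏ i, y i (σ i)` make the objective an expectation over independent
coordinates. A term depending on coordinate `i` alone reduces to its marginal expectation, since
every other weight vector sums to one; the likelihood term is instead conditioned on coordinate
`j`, leaving an expectation over the remaining coordinates `{i // i ≠ j} → Fin Np`.
-/

open Finset

section ProductWeights

variable {α β R : Type*} [Fintype α] [DecidableEq α] [Fintype β] [CommSemiring R]

theorem sum_pi_prod_mul_eq_sum_mul_sum_subtype_ne (u : α → β → R) (F : (α → β) → R) (a : α) :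
    ∑ σ : α → β, (∏ i, u i (σ i)) * F σ
      = ∑ b, u a b * ∑ τ : {i // i ≠ a} → β,
          (∏ i, u i.1 (τ i)) * F ((Equiv.funSplitAt a β).symm (b, τ)) := by
  rw [← (Equiv.funSplitAt a β).symm.sum_comp, Fintype.sum_prod_type]
  refine sum_congr rfl fun b _ => ?_
  rw [mul_sum]
  refine sum_congr rfl fun τ _ => ?_
  rw [Fintype.prod_eq_mul_prod_subtype_ne _ a, mul_assoc]
  have hτ : ∀ i : {i // i ≠ a}, (Equiv.funSplitAt a β).symm (b, τ) i = τ i := fun i => by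
    simp [Equiv.funSplitAt_symm_apply, i.2]
  simp [hτ, Equiv.funSplitAt_symm_apply]

theorem sum_pi_prod_eq_one (u : α → β → R) (hu : ∀ a, ∑ b, u a b = 1) :
    ∑ σ : α → β, ∏ i, u i (σ i) = 1 := by
  rw [← Fintype.prod_sum]
  simp [hu]

theorem sum_pi_prod_mul_apply (u : α → β → R) (hu : ∀ a, ∑ b, u a b = 1) (a : α) (g : β → R) :
    ∑ σ : α → β, (∏ i, u i (σ i)) * g (σ a) = ∑ b, u a b * g b := by
  rw [sum_pi_prod_mul_eq_sum_mul_sum_subtype_ne u _ a]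
  refine sum_congr rfl fun b _ => ?_
  simp only [Equiv.funSplitAt_symm_apply, dif_pos, ← sum_mul,
    sum_pi_prod_eq_one (fun i : {i // i ≠ a} => u i.1) (fun i => hu i.1), one_mul]

theorem sum_pi_prod_mul_sum_apply (u : α → β → R) (hu : ∀ a, ∑ b, u a b = 1)
    (g : α → β → R) :
    ∑ σ : α → β, (∏ i, u i (σ i)) * ∑ a, g a (σ a) = ∑ a, ∑ b, u a b * g a b := by
  simp_rw [mul_sum]
  rw [sum_comm]
  exact sum_congr rfl fun a _ => sum_pi_prod_mul_apply u hu a (g a)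

end ProductWeights

open Finset in
theorem mean_field_objective_block_decomposition_general
    (J Np : ℕ)
    (x : Fin J → Fin Np → ℝ) (y : Fin J → Fin Np → ℝ)
    (hy_sum : ∀ i, ∑ p, y i p = 1)
    (prior : Fin J → ℝ → ℝ)
    (ℓ : (Fin J → ℝ) → ℝ)
    (j : Fin J) :
    ∑ σ : Fin J → Fin Np,
        (∏ i, y i (σ i)) *
          ((∑ i, Real.log (y i (σ i))) - (∑ i, Real.log (prior i (x i (σ i))))
            - Real.log (ℓ (fun i => x i (σ i))))
      = (∑ p, y j p * Real.log (y j p))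
        - (∑ p, y j p *
            (Real.log (prior j (x j p)) +
              ∑ σ : {i : Fin J // i ≠ j} → Fin Np,
                (∏ i, y i.1 (σ i)) *
                  Real.log (ℓ (fun i => if h : i = j then x j p else x i (σ ⟨i, h⟩)))))
        + ∑ i ∈ Finset.univ.erase j, ∑ p, y i p * (Real.log (y i p) - Real.log (prior i (x i p))) := by
  have hx_splice : ∀ p (τ : {i : Fin J // i ≠ j} → Fin Np),
      (fun i => x i ((Equiv.funSplitAt j _).symm (p, τ) i))
        = fun i => if h : i = j then x j p else x i (τ ⟨i, h⟩) := by
    intro p τ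
    funext i
    by_cases h : i = j
    · subst h; simp [Equiv.funSplitAt_symm_apply]
    · simp [Equiv.funSplitAt_symm_apply, h]
  calc _ = ∑ σ : Fin J → Fin Np, (∏ i, y i (σ i)) *
              ∑ i, (Real.log (y i (σ i)) - Real.log (prior i (x i (σ i))))
            - ∑ σ : Fin J → Fin Np, (∏ i, y i (σ i)) * Real.log (ℓ (fun i => x i (σ i))) := by
        rw [← sum_sub_distrib]
        simp only [sum_sub_distrib, mul_sub]
    _ = ∑ i, ∑ p, y i p * (Real.log (y i p) - Real.log (prior i (x i p)))
          - ∑ p, y j p * ∑ τ : {i : Fin J // i ≠ j} → Fin Np, (∏ i, y i.1 (τ i)) *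
              Real.log (ℓ (fun i => if h : i = j then x j p else x i (τ ⟨i, h⟩))) := by
        rw [sum_pi_prod_mul_sum_apply y hy_sum
          (fun i p => Real.log (y i p) - Real.log (prior i (x i p))),
          sum_pi_prod_mul_eq_sum_mul_sum_subtype_ne y _ j]
        simp only [hx_splice]
    _ = _ := by
        rw [← add_sum_erase _ _ (mem_univ j)]
        simp only [mul_add, mul_sub, sum_add_distrib, sum_sub_distrib]
        ring

open Finset in
/-- Block decomposition of the full mean-field particle-based VBI objective:
for each fixed block `j`, the objective equals the `j`-th block objective
`L_j` plus a constant `C_j` not depending on the `j`-th block. -/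
theorem mean_field_objective_block_decomposition
    (J Np : ℕ) (hJ : 1 ≤ J)
    (x : Fin J → Fin Np → ℝ) (y : Fin J → Fin Np → ℝ)
    (hy_pos : ∀ i p, 0 < y i p) (hy_sum : ∀ i, ∑ p, y i p = 1)
    (prior : Fin J → ℝ → ℝ) (hprior : ∀ i t, 0 < prior i t)
    (ℓ : (Fin J → ℝ) → ℝ) (hℓ : ∀ v, 0 < ℓ v)
    (j : Fin J) :
    ∑ σ : Fin J → Fin Np,
        (∏ i, y i (σ i)) *
          ((∑ i, Real.log (y i (σ i))) - (∑ i, Real.log (prior i (x i (σ i))))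
            - Real.log (ℓ (fun i => x i (σ i))))
      = (∑ p, y j p * Real.log (y j p))
        - (∑ p, y j p *
            (Real.log (prior j (x j p)) +
              ∑ σ : {i : Fin J // i ≠ j} → Fin Np,
                (∏ i, y i.1 (σ i)) *
                  Real.log (ℓ (fun i => if h : i = j then x j p else x i (σ ⟨i, h⟩)))))
        + ∑ i ∈ Finset.univ.erase j, ∑ p, y i p * (Real.log (y i p) - Real.log (prior i (x i p))) :=
  mean_field_objective_block_decomposition_general J Np x y hy_sum prior ℓ j
end

section
/- Let n ∈ ℕ, Γ > 0, C ≥ 0, L ≥ 0 and R ≥ 0. Let c₁, c₂, x₁, x₂ ∈ ℝⁿ with ‖c₂‖ ≤ C and ‖c₁ − c₂‖ ≤ L·‖x₁ − x₂‖, and consider the two quadratic surrogate functions f̄_i(x) = c_iᵀ(x − x_i) + Γ‖x − x_i‖² for i = 1, 2. Then for every x ∈ ℝⁿ with ‖x − x₁‖ ≤ R and ‖x − x₂‖ ≤ R, |f̄₁(x) − f̄₂(x)| ≤ (L·R + C + 2Γ·R) · ‖x₁ − x₂‖. -/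
open RealInnerProductSpace

lemma abs_sq_norm_sub_sq_norm_le {E : Type*} [SeminormedAddCommGroup E] (u v : E) :
    |‖u‖ ^ 2 - ‖v‖ ^ 2| ≤ (‖u‖ + ‖v‖) * ‖u - v‖ := by
  calc |‖u‖ ^ 2 - ‖v‖ ^ 2| = (‖u‖ + ‖v‖) * |‖u‖ - ‖v‖| := by
        rw [sq_sub_sq, abs_mul, abs_of_nonneg (by positivity)]
    _ ≤ (‖u‖ + ‖v‖) * ‖u - v‖ := by gcongr; exact abs_norm_sub_norm_le u v

section Surrogate

variable {E : Type*} [NormedAddCommGroup E] [InnerProductSpace ℝ E]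

noncomputable def quadSurrogate (Γ : ℝ) (c x₀ x : E) : ℝ :=
  ⟪c, x - x₀⟫ + Γ * ‖x - x₀‖ ^ 2

lemma quadSurrogate_sub_quadSurrogate (Γ : ℝ) (c₁ c₂ x₁ x₂ x : E) :
    quadSurrogate Γ c₁ x₁ x - quadSurrogate Γ c₂ x₂ x =
      ⟪c₁ - c₂, x - x₁⟫ + ⟪c₂, x₂ - x₁⟫ + Γ * (‖x - x₁‖ ^ 2 - ‖x - x₂‖ ^ 2) := by
  simp only [quadSurrogate, inner_sub_left, inner_sub_right]
  ring

lemma abs_quadSurrogate_sub_le {Γ : ℝ} (hΓ : 0 ≤ Γ) (c₁ c₂ x₁ x₂ x : E) :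
    |quadSurrogate Γ c₁ x₁ x - quadSurrogate Γ c₂ x₂ x| ≤
      ‖c₁ - c₂‖ * ‖x - x₁‖ + ‖c₂‖ * ‖x₁ - x₂‖
        + Γ * ((‖x - x₁‖ + ‖x - x₂‖) * ‖x₁ - x₂‖) := by
  have hgrad : |⟪c₁ - c₂, x - x₁⟫| ≤ ‖c₁ - c₂‖ * ‖x - x₁‖ := abs_real_inner_le_norm _ _
  have hshift : |⟪c₂, x₂ - x₁⟫| ≤ ‖c₂‖ * ‖x₁ - x₂‖ := by
    simpa only [norm_sub_rev x₂ x₁] using abs_real_inner_le_norm c₂ (x₂ - x₁)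
  have hquad : |Γ * (‖x - x₁‖ ^ 2 - ‖x - x₂‖ ^ 2)| ≤
      Γ * ((‖x - x₁‖ + ‖x - x₂‖) * ‖x₁ - x₂‖) := by
    rw [abs_mul, abs_of_nonneg hΓ]
    gcongr
    simpa only [sub_sub_sub_cancel_left, norm_sub_rev x₂ x₁]
      using abs_sq_norm_sub_sq_norm_le (x - x₁) (x - x₂)
  rw [quadSurrogate_sub_quadSurrogate]
  exact (abs_add_three _ _ _).trans (add_le_add_three hgrad hshift hquad)

end Surrogate

theorem surrogate_lipschitz_in_iterate_general
    (n : ℕ) (Γ C L R : ℝ) (hΓ : 0 < Γ)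
    (c₁ c₂ x₁ x₂ : EuclideanSpace ℝ (Fin n))
    (hc₂ : ‖c₂‖ ≤ C) (hc : ‖c₁ - c₂‖ ≤ L * ‖x₁ - x₂‖)
    (f₁ f₂ : EuclideanSpace ℝ (Fin n) → ℝ)
    (hf₁ : ∀ x, f₁ x = (inner ℝ c₁ (x - x₁) : ℝ) + Γ * ‖x - x₁‖ ^ 2)
    (hf₂ : ∀ x, f₂ x = (inner ℝ c₂ (x - x₂) : ℝ) + Γ * ‖x - x₂‖ ^ 2) :
    ∀ x : EuclideanSpace ℝ (Fin n), ‖x - x₁‖ ≤ R → ‖x - x₂‖ ≤ R →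
      |f₁ x - f₂ x| ≤ (L * R + C + 2 * Γ * R) * ‖x₁ - x₂‖ := by
  intro x hx₁ hx₂
  have hdiff : f₁ x - f₂ x = quadSurrogate Γ c₁ x₁ x - quadSurrogate Γ c₂ x₂ x := by
    rw [hf₁, hf₂, quadSurrogate, quadSurrogate]
  calc |f₁ x - f₂ x|
      ≤ ‖c₁ - c₂‖ * ‖x - x₁‖ + ‖c₂‖ * ‖x₁ - x₂‖
          + Γ * ((‖x - x₁‖ + ‖x - x₂‖) * ‖x₁ - x₂‖) :=
        hdiff ▸ abs_quadSurrogate_sub_le hΓ.le c₁ c₂ x₁ x₂ x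
    _ ≤ L * ‖x₁ - x₂‖ * R + C * ‖x₁ - x₂‖ + Γ * ((R + R) * ‖x₁ - x₂‖) := by
        gcongr
        exact (norm_nonneg _).trans hc
    _ = (L * R + C + 2 * Γ * R) * ‖x₁ - x₂‖ := by ring

/-- Two quadratic surrogates centered at two iterates `x₁, x₂`, whose gradient
estimates are bounded and Lipschitz in the iterates, differ by at most a constant
times `‖x₁ - x₂‖` uniformly on a bounded set. -/
theorem surrogate_lipschitz_in_iterate
    (n : ℕ) (Γ C L R : ℝ) (hΓ : 0 < Γ) (hC : 0 ≤ C) (hL : 0 ≤ L) (hR : 0 ≤ R)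
    (c₁ c₂ x₁ x₂ : EuclideanSpace ℝ (Fin n))
    (hc₂ : ‖c₂‖ ≤ C) (hc : ‖c₁ - c₂‖ ≤ L * ‖x₁ - x₂‖)
    (f₁ f₂ : EuclideanSpace ℝ (Fin n) → ℝ)
    (hf₁ : ∀ x, f₁ x = (inner ℝ c₁ (x - x₁) : ℝ) + Γ * ‖x - x₁‖ ^ 2)
    (hf₂ : ∀ x, f₂ x = (inner ℝ c₂ (x - x₂) : ℝ) + Γ * ‖x - x₂‖ ^ 2) :
    ∀ x : EuclideanSpace ℝ (Fin n), ‖x - x₁‖ ≤ R → ‖x - x₂‖ ≤ R →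
      |f₁ x - f₂ x| ≤ (L * R + C + 2 * Γ * R) * ‖x₁ - x₂‖ :=
  surrogate_lipschitz_in_iterate_general n Γ C L R hΓ c₁ c₂ x₁ x₂ hc₂ hc f₁ f₂ hf₁ hf₂
end
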